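/- Fix an integer p ≥ 1 and for n, i ∈ ℕ let A_{n,i} := Σ_{j=0}^{n} (−1)^{n−j} t^{p(n−j)(n−j−1)/2} (n choose j)_{t^p} (pj choose i)_t ∈ ℤ[t] be the p-Frobenius coefficients. Then for all n, i ∈ ℕ there exists a unique polynomial B_{n,i} ∈ ℤ[t] such that (i)_t! · A_{n,i} = (n)_{t^p}! · (p)_t^n · B_{n,i}. Moreover B_{n,i} = 0 unless n ≤ i ≤ pn, and the extreme values are B_{n,n} = t^{(p−1)n(n−1)/2} and B_{n,pn} = ∏_{k=1}^{n} ∏_{i=1}^{p−1} (kp−i)_t. -/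
import Mathlib


def qInt {R : Type*} [CommRing R] (q : R) (m : ℕ) : R := ∑ i ∈ Finset.range m, q ^ i

def qFact {R : Type*} [CommRing R] (q : R) : ℕ → R
  | 0 => 1
  | n + 1 => qFact q n * qInt q (n + 1)

def qChoose {R : Type*} [CommRing R] (q : R) : ℕ → ℕ → R
  | _, 0 => 1
  | 0, _ + 1 => 0
  | n + 1, k + 1 => qChoose q n k + q ^ (k + 1) * qChoose q n (k + 1)

namespace QAux

open Finset Polynomial

variable {R : Type*} [CommRing R] (q : R)

def e (m : ℕ) : ℕ := m * (m - 1) / 2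

lemma e_succ (m : ℕ) : e (m + 1) = e m + m := by
  cases m with
  | zero => rfl
  | succ k =>
    show (k + 2) * (k + 1) / 2 = (k + 1) * k / 2 + (k + 1)
    have h : (k + 2) * (k + 1) = (k + 1) * k + (k + 1) * 2 := by ring
    rw [h, Nat.add_mul_div_right _ _ (by norm_num : 0 < 2)]

@[simp] lemma qChoose_zero (n : ℕ) : qChoose q n 0 = 1 := by cases n <;> rfl

lemma qChoose_eq_zero : ∀ {n k : ℕ}, n < k → qChoose q n k = 0
  | 0, _ + 1, _ => rfl
  | n + 1, k + 1, h => by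
    show qChoose q n k + q ^ (k + 1) * qChoose q n (k + 1) = 0
    rw [qChoose_eq_zero (by omega : n < k), qChoose_eq_zero (by omega : n < k + 1)]
    ring

lemma qChoose_self : ∀ n : ℕ, qChoose q n n = 1
  | 0 => rfl
  | n + 1 => by
    show qChoose q n n + q ^ (n + 1) * qChoose q n (n + 1) = 1
    rw [qChoose_self n, qChoose_eq_zero q (by omega : n < n + 1)]
    ring

lemma qInt_mul (m : ℕ) : qInt q m * (q - 1) = q ^ m - 1 := geom_sum_mul q m

lemma qInt_succ (m : ℕ) : qInt q (m + 1) = qInt q m + q ^ m := Finset.sum_range_succ _ _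

lemma qFact_succ (n : ℕ) : qFact q (n + 1) = qFact q n * qInt q (n + 1) := rfl

lemma L1 : ∀ (M i : ℕ),
    q ^ e i * (q - 1) ^ i * qFact q i * qChoose q M i = ∏ k ∈ range i, (q ^ M - q ^ k) := by
  intro M
  induction M with
  | zero =>
    intro i
    cases i with
    | zero => simp [qFact, e]
    | succ s =>
      rw [qChoose_eq_zero q (by omega : 0 < s + 1),
        Finset.prod_eq_zero (Finset.mem_range.2 (Nat.succ_pos s)) (by simp)]
      ring
  | succ M ih =>
    intro i
    cases i with
    | zero => simp [qFact, e]
    | succ s =>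
      have hprod : ∏ k ∈ range (s+1), (q ^ (M+1) - q ^ k)
          = (q ^ (M+1) - 1) * q ^ s * ∏ k ∈ range s, (q ^ M - q ^ k) := by
        rw [Finset.prod_range_succ']
        have h : ∀ k ∈ range s, (q ^ (M+1) - q ^ (k+1)) = q * (q ^ M - q ^ k) := by
          intro k _; ring
        rw [Finset.prod_congr rfl h, Finset.prod_mul_distrib, Finset.prod_const, Finset.card_range]
        ring
      have h2 := ih (s+1)
      rw [e_succ, Finset.prod_range_succ, qFact_succ] at h2
      have h1 := ih s
      have hgeom : qInt q (s+1) * (q - 1) = q ^ (s+1) - 1 := qInt_mul q (s+1)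
      have hC : qChoose q (M+1) (s+1) = qChoose q M s + q ^ (s+1) * qChoose q M (s+1) := rfl
      rw [hprod, hC, e_succ, qFact_succ]
      linear_combination (q:R)^(s+1) * h2
        + q^(e s + s) * (q-1)^s * qFact q s * qChoose q M s * hgeom
        + q^s * (q^(s+1) - 1) * h1

end QAux

namespace QAux
variable {R : Type*} [CommRing R] (q : R)
open Finset

lemma L2 (n : ℕ) : ∀ x : R,
    (∑ j ∈ Finset.range (n+1), (-1:R)^(n-j) * q^(e (n-j)) * qChoose q n j * x^j)
      = ∏ k ∈ Finset.range n, (x - q^k) := by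
  induction n with
  | zero => intro x; simp [e]
  | succ n ih =>
    intro x
    rw [Finset.prod_range_succ, ← ih x]
    have step1 : (∑ j ∈ Finset.range (n+1+1),
          (-1:R)^(n+1-j) * q^(e (n+1-j)) * qChoose q (n+1) j * x^j)
        = (∑ k ∈ Finset.range (n+1), (-1:R)^(n-k) * q^(e (n-k)) *
            (qChoose q n k + q^(k+1) * qChoose q n (k+1)) * x^(k+1))
          + (-1:R)^(n+1) * q^(e (n+1)) := by
      rw [Finset.sum_range_succ']
      congr 1
      · apply Finset.sum_congr rfl
        intro k _
        have h : n + 1 - (k+1) = n - k := by omega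
        rw [h]; rfl
      · simp
    rw [step1]
    have split : (∑ k ∈ Finset.range (n+1), (-1:R)^(n-k) * q^(e (n-k)) *
            (qChoose q n k + q^(k+1) * qChoose q n (k+1)) * x^(k+1))
        = (∑ k ∈ Finset.range (n+1), (-1:R)^(n-k) * q^(e (n-k)) * qChoose q n k * x^(k+1))
          + ∑ k ∈ Finset.range (n+1), (-1:R)^(n-k) * q^(e (n-k)) *
              (q^(k+1) * qChoose q n (k+1)) * x^(k+1) := by
      rw [← Finset.sum_add_distrib]
      apply Finset.sum_congr rfl
      intro k _; ring
    rw [split]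
    have part1 : (∑ k ∈ Finset.range (n+1), (-1:R)^(n-k) * q^(e (n-k)) * qChoose q n k * x^(k+1))
        = x * ∑ j ∈ Finset.range (n+1), (-1:R)^(n-j) * q^(e (n-j)) * qChoose q n j * x^j := by
      rw [Finset.mul_sum]
      apply Finset.sum_congr rfl
      intro k _; ring
    have part2 : (∑ k ∈ Finset.range (n+1), (-1:R)^(n-k) * q^(e (n-k)) *
              (q^(k+1) * qChoose q n (k+1)) * x^(k+1)) + (-1:R)^(n+1) * q^(e (n+1))
        = (- q^n) * ∑ j ∈ Finset.range (n+1), (-1:R)^(n-j) * q^(e (n-j)) * qChoose q n j * x^j := by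
      rw [Finset.mul_sum, Finset.sum_range_succ'
        (fun j => (- q^n) * ((-1:R)^(n-j) * q^(e (n-j)) * qChoose q n j * x^j))]
      congr 1
      · rw [Finset.sum_range_succ]
        rw [qChoose_eq_zero q (by omega : n < n + 1)]
        simp only [mul_zero, zero_mul, add_zero]
        apply Finset.sum_congr rfl
        intro k hk
        have hk' : k < n := Finset.mem_range.1 hk
        have hm : n - k = (n - k - 1) + 1 := by omega
        have hsum : (n - k - 1) + (k + 1) = n := by omega
        rw [hm, e_succ, pow_succ (-1:R), pow_add q (e (n-k-1)) (n-k-1)]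
        have hq : q^(n-k-1) * q^(k+1) = q^n := by
          rw [← pow_add, hsum]
        have h1 : n - (k+1) = n - k - 1 := by omega
        rw [h1]
        calc (-1:R)^(n-k-1) * -1 * (q^(e (n-k-1)) * q^(n-k-1)) *
              (q^(k+1) * qChoose q n (k+1)) * x^(k+1)
            = -((-1:R)^(n-k-1) * q^(e (n-k-1)) * qChoose q n (k+1) * x^(k+1)) *
                (q^(n-k-1) * q^(k+1)) := by ring
          _ = -q^n * ((-1:R)^(n-k-1) * q^(e (n-k-1)) * qChoose q n (k+1) * x^(k+1)) := by
              rw [hq]; ring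
      · rw [e_succ, pow_add, pow_succ]
        simp
        ring
    rw [add_assoc, part1, part2]
    ring
end QAux


/-- The `p`-Frobenius coefficients
`A_{n,i} := Σ_{j=0}^{n} (−1)^{n−j} t^{p(n−j)(n−j−1)/2} (n choose j)_{t^p} (pj choose i)_t`
in `ℤ[t]`. -/
noncomputable def frobCoeff (p n i : ℕ) : Polynomial ℤ :=
  ∑ j ∈ Finset.range (n + 1),
    (-1 : Polynomial ℤ) ^ (n - j) * Polynomial.X ^ (p * ((n - j) * (n - j - 1) / 2)) *
      qChoose ((Polynomial.X : Polynomial ℤ) ^ p) n j *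
      qChoose (Polynomial.X : Polynomial ℤ) (p * j) i

namespace QAux
open Finset Polynomial

noncomputable def EE (i : ℕ) : Polynomial (Polynomial ℤ) :=
  ∏ k ∈ Finset.range i, (Polynomial.X - Polynomial.C ((Polynomial.X : Polynomial ℤ) ^ k))

lemma EE_monic (i : ℕ) : (EE i).Monic :=
  monic_prod_of_monic _ _ fun k _ => monic_X_sub_C _

lemma EE_natDegree (i : ℕ) : (EE i).natDegree = i := by
  rw [EE, natDegree_prod_of_monic _ _ fun k _ => monic_X_sub_C _]
  simp only [natDegree_X_sub_C, Finset.sum_const, smul_eq_mul, Finset.card_range, mul_one]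

lemma EE_eval (i : ℕ) (y : Polynomial ℤ) :
    (EE i).eval y = ∏ k ∈ Finset.range i, (y - (Polynomial.X : Polynomial ℤ) ^ k) := by
  simp [EE, eval_prod]

lemma EE_eval_sum (i : ℕ) (y : Polynomial ℤ) :
    (EE i).eval y = ∑ m ∈ Finset.range (i+1), (EE i).coeff m * y ^ m :=
  eval_eq_sum_range' (by rw [EE_natDegree]; omega) y

lemma MI (p n i : ℕ) :
    (Polynomial.X : Polynomial ℤ) ^ (e i) * (Polynomial.X - 1) ^ i *
        qFact (Polynomial.X : Polynomial ℤ) i * frobCoeff p n i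
      = Polynomial.X ^ (p * e n) * (Polynomial.X - 1) ^ n *
          (qInt (Polynomial.X : Polynomial ℤ) p) ^ n *
          qFact ((Polynomial.X : Polynomial ℤ) ^ p) n *
          (∑ m ∈ Finset.range (i+1),
            (EE i).coeff m * qChoose ((Polynomial.X : Polynomial ℤ) ^ p) m n) := by
  set t : Polynomial ℤ := Polynomial.X with ht
  rw [frobCoeff, Finset.mul_sum]
  calc
    (∑ j ∈ Finset.range (n+1), t ^ (e i) * (t - 1) ^ i * qFact t i *
        ((-1) ^ (n-j) * t ^ (p * ((n-j) * (n-j-1) / 2)) *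
          qChoose (t ^ p) n j * qChoose t (p*j) i))
        = ∑ j ∈ Finset.range (n+1), ((-1:Polynomial ℤ) ^ (n-j) * (t^p) ^ (e (n-j)) *
            qChoose (t ^ p) n j) * (EE i).eval (t ^ (p*j)) := by
      apply Finset.sum_congr rfl
      intro j _
      have hpow : t ^ (p * ((n-j) * (n-j-1) / 2)) = (t^p) ^ (e (n-j)) := by
        rw [← pow_mul]
        rfl
      rw [hpow, EE_eval, ← L1 t (p*j) i]
      ring
    _ = ∑ j ∈ Finset.range (n+1), ((-1:Polynomial ℤ) ^ (n-j) * (t^p) ^ (e (n-j)) *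
            qChoose (t ^ p) n j) *
          ∑ m ∈ Finset.range (i+1), (EE i).coeff m * ((t^p)^m) ^ j := by
      apply Finset.sum_congr rfl
      intro j _
      rw [EE_eval_sum]
      congr 1
      apply Finset.sum_congr rfl
      intro m _
      rw [← pow_mul, ← pow_mul, ← pow_mul, show p*j*m = p*(m*j) by ring]
    _ = ∑ m ∈ Finset.range (i+1), (EE i).coeff m *
          ∑ j ∈ Finset.range (n+1), (-1:Polynomial ℤ) ^ (n-j) * (t^p) ^ (e (n-j)) *
            qChoose (t ^ p) n j * ((t^p)^m) ^ j := by
      simp only [Finset.mul_sum]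
      rw [Finset.sum_comm]
      apply Finset.sum_congr rfl
      intro m _
      apply Finset.sum_congr rfl
      intro j _
      ring
    _ = ∑ m ∈ Finset.range (i+1), (EE i).coeff m *
          ∏ k ∈ Finset.range n, ((t^p)^m - (t^p)^k) := by
      apply Finset.sum_congr rfl
      intro m _
      rw [L2]
    _ = ∑ m ∈ Finset.range (i+1), (EE i).coeff m *
          ((t^p) ^ (e n) * (t^p - 1) ^ n * qFact (t^p) n * qChoose (t^p) m n) := by
      apply Finset.sum_congr rfl
      intro m _
      rw [L1]
    _ = t ^ (p * e n) * (t - 1) ^ n * (qInt t p) ^ n * qFact (t ^ p) n *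
          (∑ m ∈ Finset.range (i+1), (EE i).coeff m * qChoose (t ^ p) m n) := by
      have h : (t^p - 1) = (t - 1) * qInt t p := by rw [← qInt_mul]; ring
      rw [Finset.mul_sum]
      apply Finset.sum_congr rfl
      intro m _
      rw [h, mul_pow, ← pow_mul]
      ring

end QAux

namespace QAux
open Finset Polynomial
variable {R : Type*} [CommRing R] (q : R)

lemma qInt_add (m n : ℕ) : qInt q (m + n) = qInt q m + q ^ m * qInt q n := by
  rw [qInt, Finset.sum_range_add, qInt, qInt, Finset.mul_sum]
  congr 1
  exact Finset.sum_congr rfl fun k _ => (pow_add q m k)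

lemma qInt_mul_nat (a b : ℕ) : qInt q (a * b) = qInt (q ^ b) a * qInt q b := by
  induction a with
  | zero => simp [qInt]
  | succ a ih =>
    have h : (a + 1) * b = a * b + b := by ring
    rw [h, qInt_add, ih, qInt_succ (q ^ b) a, ← pow_mul, show a * b = b * a by ring]
    ring

lemma qFact_add (a b : ℕ) :
    qFact q (a + b) = qFact q a * ∏ j ∈ Finset.range b, qInt q (a + j + 1) := by
  induction b with
  | zero => simp
  | succ b ih =>
    have h : a + (b + 1) = (a + b) + 1 := by ring
    rw [h, qFact_succ, ih, Finset.prod_range_succ]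
    ring

lemma qInt_zero_eq_one (m : ℕ) (hm : 1 ≤ m) : qInt (0 : R) m = 1 := by
  induction m with
  | zero => omega
  | succ k ih =>
    rw [qInt_succ]
    cases k with
    | zero => simp [qInt]
    | succ k' => rw [ih (by omega), pow_succ]; ring

lemma qFact_zero_eq_one (n : ℕ) : qFact (0 : R) n = 1 := by
  induction n with
  | zero => rfl
  | succ k ih => rw [qFact_succ, ih, qInt_zero_eq_one _ (by omega)]; ring

lemma qInt_one (m : ℕ) : qInt (1 : R) m = m := by
  simp [qInt]

lemma qFact_one_ne_zero (n : ℕ) : qFact (1 : ℚ) n ≠ 0 := by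
  induction n with
  | zero => norm_num [qFact]
  | succ k ih =>
    rw [qFact_succ, qInt_one]
    push_cast
    positivity

-- map lemmas
variable {S : Type*} [CommRing S] (φ : R →+* S)

lemma map_qInt (m : ℕ) : φ (qInt q m) = qInt (φ q) m := by
  simp [qInt, map_sum, map_pow]

lemma map_qFact (n : ℕ) : φ (qFact q n) = qFact (φ q) n := by
  induction n with
  | zero => simp [qFact]
  | succ k ih => rw [qFact_succ, map_mul, ih, map_qInt, qFact_succ]

lemma map_qChoose : ∀ (n k : ℕ), φ (qChoose q n k) = qChoose (φ q) n k
  | n, 0 => by simp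
  | 0, k + 1 => by simp [qChoose]
  | n + 1, k + 1 => by
    show φ (qChoose q n k + q ^ (k+1) * qChoose q n (k+1)) = _
    rw [map_add, map_mul, map_pow, map_qChoose n k, map_qChoose n (k+1)]
    rfl

-- monicity
lemma qInt_pow_monic (a m : ℕ) (ha : 1 ≤ a) :
    (qInt ((Polynomial.X : Polynomial ℤ) ^ a) (m+1)).Monic ∧
      (qInt ((Polynomial.X : Polynomial ℤ) ^ a) (m+1)).degree = (a * m : ℕ) := by
  induction m with
  | zero =>
    constructor
    · simp [qInt, monic_one]
    · simp [qInt]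
  | succ m ih =>
    have hstep : qInt ((Polynomial.X : Polynomial ℤ) ^ a) (m+2)
        = qInt ((Polynomial.X : Polynomial ℤ) ^ a) (m+1) + Polynomial.X ^ (a * (m+1)) := by
      rw [qInt_succ, ← pow_mul]
    have hdeg : (qInt ((Polynomial.X : Polynomial ℤ) ^ a) (m+1)).degree
        < ((Polynomial.X : Polynomial ℤ) ^ (a * (m+1))).degree := by
      rw [ih.2, degree_X_pow]
      have : a * m < a * (m + 1) := by
        calc a * m < a * m + a := by omega
          _ = a * (m + 1) := by ring
      exact_mod_cast Nat.cast_lt.mpr this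
    constructor
    · rw [hstep]
      exact (monic_X_pow _).add_of_right hdeg
    · rw [hstep, degree_add_eq_right_of_degree_lt hdeg, degree_X_pow]

lemma qFact_pow_monic (a n : ℕ) (ha : 1 ≤ a) :
    (qFact ((Polynomial.X : Polynomial ℤ) ^ a) n).Monic := by
  induction n with
  | zero => exact monic_one
  | succ k ih =>
    rw [qFact_succ]
    exact ih.mul (qInt_pow_monic a k ha).1

end QAux

namespace QAux
open Finset Polynomial

lemma PI (p : ℕ) (hp : 1 ≤ p) (n : ℕ) :
    qFact (Polynomial.X : Polynomial ℤ) (p * n)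
      = qFact ((Polynomial.X : Polynomial ℤ) ^ p) n *
          (qInt (Polynomial.X : Polynomial ℤ) p) ^ n *
          ∏ k ∈ Finset.Icc 1 n, ∏ j ∈ Finset.Icc 1 (p - 1),
            qInt (Polynomial.X : Polynomial ℤ) (k * p - j) := by
  set t : Polynomial ℤ := Polynomial.X with ht
  induction n with
  | zero => simp [qFact]
  | succ n ih =>
    have h1 : p * (n + 1) = p * n + p := by ring
    rw [h1, qFact_add]
    -- split the range-p product into first (p-1) factors and the top factor
    have hp' : p = (p - 1) + 1 := by omega
    have hsplit : (∏ j ∈ Finset.range p, qInt t (p * n + j + 1))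
        = (∏ j ∈ Finset.range (p-1), qInt t (p * n + j + 1)) * qInt t (p * (n+1)) := by
      have hr : Finset.range p = Finset.range ((p-1)+1) := by rw [← hp']
      rw [hr, Finset.prod_range_succ]
      have h2 : p * n + (p - 1) + 1 = p * (n + 1) := by
        have h3 : p * (n+1) = p * n + p := by ring
        omega
      rw [h2]
    have htop : qInt t (p * (n+1)) = qInt (t ^ p) (n+1) * qInt t p := by
      rw [show p * (n+1) = (n+1) * p by ring, qInt_mul_nat]
    have hicc : ∀ (f : ℕ → Polynomial ℤ) (m : ℕ),
        ∏ j ∈ Finset.Icc 1 m, f j = ∏ j ∈ Finset.range m, f (j+1) := by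
      intro f m
      induction m with
      | zero => simp
      | succ m ihm =>
        rw [Finset.prod_Icc_succ_top (by omega : 1 ≤ m + 1), Finset.prod_range_succ, ihm]
    have hmid : (∏ j ∈ Finset.range (p-1), qInt t (p * n + j + 1))
        = ∏ j ∈ Finset.Icc 1 (p-1), qInt t ((n+1) * p - j) := by
      rw [hicc, ← Finset.prod_range_reflect]
      apply Finset.prod_congr rfl
      intro j hj
      simp only [Finset.mem_range] at hj
      congr 1
      have h2 : (n+1) * p = p * n + p := by ring
      omega
    rw [hsplit, hmid, htop, ih, Finset.prod_Icc_succ_top (by omega : 1 ≤ n + 1),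
      qFact_succ]
    ring

end QAux

namespace QAux
open Finset Polynomial

lemma monic_qInt_X (p : ℕ) (hp : 1 ≤ p) : (qInt (Polynomial.X : Polynomial ℤ) p).Monic := by
  have h := (qInt_pow_monic 1 (p-1) le_rfl).1
  rw [pow_one, show p - 1 + 1 = p by omega] at h
  exact h

lemma monic_d (p n : ℕ) (hp : 1 ≤ p) :
    (qFact ((Polynomial.X : Polynomial ℤ) ^ p) n *
      (qInt (Polynomial.X : Polynomial ℤ) p) ^ n).Monic :=
  (qFact_pow_monic p n hp).mul ((monic_qInt_X p hp).pow n)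

lemma dvd_main (p n i : ℕ) (hp : 1 ≤ p) :
    (qFact ((Polynomial.X : Polynomial ℤ) ^ p) n *
        (qInt (Polynomial.X : Polynomial ℤ) p) ^ n) ∣
      (qFact (Polynomial.X : Polynomial ℤ) i * frobCoeff p n i) := by
  set d : Polynomial ℤ := qFact ((Polynomial.X : Polynomial ℤ) ^ p) n *
      (qInt (Polynomial.X : Polynomial ℤ) p) ^ n with hd
  set f : Polynomial ℤ := qFact (Polynomial.X : Polynomial ℤ) i * frobCoeff p n i with hf
  have hMI := MI p n i
  have hdvd1 : d ∣ (Polynomial.X : Polynomial ℤ) ^ (e i) * (Polynomial.X - 1) ^ i * f := by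
    refine ⟨Polynomial.X ^ (p * e n) * (Polynomial.X - 1) ^ n *
      (∑ m ∈ Finset.range (i+1), (EE i).coeff m *
        qChoose ((Polynomial.X : Polynomial ℤ) ^ p) m n), ?_⟩
    rw [hd, hf]
    linear_combination hMI
  -- pass to ℚ[X]
  set ψ : ℤ →+* ℚ := Int.castRingHom ℚ with hψ
  have hinj : Function.Injective ψ := Int.cast_injective
  have hmon : d.Monic := monic_d p n hp
  set D : Polynomial ℚ := d.map ψ with hD
  have hDQ : D = qFact ((Polynomial.X : Polynomial ℚ) ^ p) n *
      (qInt (Polynomial.X : Polynomial ℚ) p) ^ n := by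
    rw [hD, hd, Polynomial.map_mul, Polynomial.map_pow,
      ← Polynomial.coe_mapRingHom, map_qFact, map_qInt]
    simp
  have heval0 : D.eval 0 = 1 := by
    rw [hDQ]
    have h1 : Polynomial.eval (0:ℚ) (qFact ((Polynomial.X : Polynomial ℚ) ^ p) n)
        = qFact ((0:ℚ) ^ p) n := by
      rw [← Polynomial.coe_evalRingHom, map_qFact]
      simp
    have h2 : Polynomial.eval (0:ℚ) (qInt (Polynomial.X : Polynomial ℚ) p)
        = qInt (0:ℚ) p := by
      rw [← Polynomial.coe_evalRingHom, map_qInt]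
      simp
    rw [eval_mul, eval_pow, h1, h2, zero_pow (by omega : p ≠ 0),
      qFact_zero_eq_one, qInt_zero_eq_one _ hp]
    ring
  have heval1 : D.eval 1 ≠ 0 := by
    rw [hDQ]
    have h1 : Polynomial.eval (1:ℚ) (qFact ((Polynomial.X : Polynomial ℚ) ^ p) n)
        = qFact ((1:ℚ) ^ p) n := by
      rw [← Polynomial.coe_evalRingHom, map_qFact]
      simp
    have h2 : Polynomial.eval (1:ℚ) (qInt (Polynomial.X : Polynomial ℚ) p)
        = qInt (1:ℚ) p := by
      rw [← Polynomial.coe_evalRingHom, map_qInt]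
      simp
    rw [eval_mul, eval_pow, h1, h2, one_pow, qInt_one]
    apply mul_ne_zero (qFact_one_ne_zero n)
    apply pow_ne_zero
    exact_mod_cast (by omega : (p:ℤ) ≠ 0)
  have cop1 : IsCoprime (Polynomial.X : Polynomial ℚ) D := by
    have hx : (Polynomial.X : Polynomial ℚ) ∣ D - 1 := by
      rw [Polynomial.X_dvd_iff, Polynomial.coeff_sub, Polynomial.coeff_zero_eq_eval_zero,
        heval0]
      simp
    obtain ⟨g, hg⟩ := hx
    exact ⟨-g, 1, by linear_combination hg⟩
  have cop2 : IsCoprime ((Polynomial.X : Polynomial ℚ) - 1) D := by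
    set c : ℚ := D.eval 1 with hc
    have hroot : ((Polynomial.X : Polynomial ℚ) - Polynomial.C 1) ∣ (D - Polynomial.C c) := by
      rw [Polynomial.dvd_iff_isRoot]
      simp [Polynomial.IsRoot, hc]
    rw [Polynomial.C_1] at hroot
    obtain ⟨g, hg⟩ := hroot
    refine ⟨-(Polynomial.C c⁻¹) * g, Polynomial.C c⁻¹, ?_⟩
    have hcc : (Polynomial.C c⁻¹ : Polynomial ℚ) * Polynomial.C c = 1 := by
      rw [← Polynomial.C_mul, inv_mul_cancel₀ heval1, Polynomial.C_1]
    linear_combination Polynomial.C c⁻¹ * hg + hcc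
  have hdvdQ : D ∣ (f.map ψ) *
      ((Polynomial.X : Polynomial ℚ) ^ (e i) * ((Polynomial.X : Polynomial ℚ) - 1) ^ i) := by
    have := map_dvd (Polynomial.mapRingHom ψ) hdvd1
    simp only [Polynomial.coe_mapRingHom, Polynomial.map_mul, Polynomial.map_pow,
      Polynomial.map_sub, Polynomial.map_X, Polynomial.map_one] at this
    rw [← hD] at this
    refine dvd_trans this ?_
    exact ⟨1, by ring⟩
  have hcop : IsCoprime D
      ((Polynomial.X : Polynomial ℚ) ^ (e i) * ((Polynomial.X : Polynomial ℚ) - 1) ^ i) :=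
    ((cop1.symm.pow_right).mul_right (cop2.symm.pow_right))
  have hstrip : D ∣ f.map ψ := hcop.dvd_of_dvd_mul_right hdvdQ
  have hmod : f %ₘ d = 0 := by
    apply Polynomial.map_injective ψ hinj
    rw [Polynomial.map_modByMonic _ hmon, Polynomial.map_zero]
    exact (Polynomial.modByMonic_eq_zero_iff_dvd (hmon.map ψ)).2 hstrip
  exact (Polynomial.modByMonic_eq_zero_iff_dvd hmon).1 hmod

end QAux


open Finset Polynomial QAux

/-- For each `n, i` there is a unique `B_{n,i} ∈ ℤ[t]` with
`(i)_t! A_{n,i} = (n)_{t^p}! (p)_t^n B_{n,i}`; moreover `B_{n,i} = 0` unless `n ≤ i ≤ pn`,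
`B_{n,n} = t^{(p−1)n(n−1)/2}` and `B_{n,pn} = ∏_{k=1}^n ∏_{j=1}^{p−1} (kp−j)_t`. -/
theorem statement18 (p : ℕ) (hp : 1 ≤ p) :
    (∀ n i : ℕ, ∃! B : Polynomial ℤ,
      qFact (Polynomial.X : Polynomial ℤ) i * frobCoeff p n i =
        qFact ((Polynomial.X : Polynomial ℤ) ^ p) n *
          (qInt (Polynomial.X : Polynomial ℤ) p) ^ n * B) ∧
    (∀ n i : ℕ, ∀ B : Polynomial ℤ,
      qFact (Polynomial.X : Polynomial ℤ) i * frobCoeff p n i =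
        qFact ((Polynomial.X : Polynomial ℤ) ^ p) n *
          (qInt (Polynomial.X : Polynomial ℤ) p) ^ n * B →
      ((i < n ∨ p * n < i) → B = 0) ∧
      (i = n → B = Polynomial.X ^ ((p - 1) * (n * (n - 1) / 2))) ∧
      (i = p * n → B = ∏ k ∈ Finset.Icc 1 n, ∏ j ∈ Finset.Icc 1 (p - 1),
        qInt (Polynomial.X : Polynomial ℤ) (k * p - j))) := by
  have hd0 : ∀ n : ℕ, (qFact ((Polynomial.X : Polynomial ℤ) ^ p) n *
      (qInt (Polynomial.X : Polynomial ℤ) p) ^ n) ≠ 0 :=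
    fun n => (monic_d p n hp).ne_zero
  have hX1 : ((Polynomial.X : Polynomial ℤ) - 1) ≠ 0 := by
    rw [← Polynomial.C_1]
    exact Polynomial.X_sub_C_ne_zero 1
  constructor
  · intro n i
    obtain ⟨B, hB⟩ := dvd_main p n i hp
    refine ⟨B, hB, fun y hy => ?_⟩
    exact mul_left_cancel₀ (hd0 n) (hy.symm.trans hB)
  · intro n i B hB
    refine ⟨?_, ?_, ?_⟩
    · -- vanishing outside the band
      intro hcase
      have hf0 : qFact (Polynomial.X : Polynomial ℤ) i * frobCoeff p n i = 0 := by
        rcases hcase with h | h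
        · -- i < n
          have hS : (∑ m ∈ Finset.range (i+1), (EE i).coeff m *
              qChoose ((Polynomial.X : Polynomial ℤ) ^ p) m n) = 0 := by
            apply Finset.sum_eq_zero
            intro m hm
            rw [qChoose_eq_zero _ (by have := Finset.mem_range.1 hm; omega : m < n)]
            ring
          have hMI := MI p n i
          rw [hS, mul_zero] at hMI
          have hkey : ((Polynomial.X : Polynomial ℤ) ^ (e i) * (Polynomial.X - 1) ^ i) *
              (qFact (Polynomial.X : Polynomial ℤ) i * frobCoeff p n i) = 0 := by
            linear_combination hMI
          have hne : ((Polynomial.X : Polynomial ℤ) ^ (e i) * (Polynomial.X - 1) ^ i) ≠ 0 :=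
            mul_ne_zero (pow_ne_zero _ Polynomial.X_ne_zero) (pow_ne_zero _ hX1)
          exact (mul_eq_zero.1 hkey).resolve_left hne
        · -- p * n < i
          have hA : frobCoeff p n i = 0 := by
            rw [frobCoeff]
            apply Finset.sum_eq_zero
            intro j hj
            have hj' : j ≤ n := by have := Finset.mem_range.1 hj; omega
            have hlt : p * j < i := by
              have h1 : p * j ≤ p * n := Nat.mul_le_mul_left p hj'
              omega
            rw [qChoose_eq_zero _ hlt, mul_zero]
          rw [hA, mul_zero]
      rw [hf0] at hB
      exact ((mul_eq_zero.1 hB.symm).resolve_left (hd0 n))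
    · -- i = n
      intro hi
      subst hi
      have hS : (∑ m ∈ Finset.range (i+1), (EE i).coeff m *
          qChoose ((Polynomial.X : Polynomial ℤ) ^ p) m i) = 1 := by
        rw [Finset.sum_eq_single_of_mem i (Finset.self_mem_range_succ i)]
        · have hc : (EE i).coeff i = 1 := by
            have h1 := (EE_monic i).coeff_natDegree
            rwa [EE_natDegree] at h1
          rw [hc, qChoose_self]
          ring
        · intro m hm hmn
          rw [qChoose_eq_zero _ (by have := Finset.mem_range.1 hm; omega : m < i)]
          ring
      have hMI := MI p i i
      rw [hS, mul_one] at hMI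
      obtain ⟨p', rfl⟩ : ∃ p', p = p' + 1 := ⟨p - 1, by omega⟩
      show B = Polynomial.X ^ (p' * e i)
      have h2 : (Polynomial.X : Polynomial ℤ) ^ ((p'+1) * e i)
          = Polynomial.X ^ (e i) * Polynomial.X ^ (p' * e i) := by
        rw [← pow_add]
        congr 1
        ring
      rw [h2] at hMI
      have hne : ((Polynomial.X : Polynomial ℤ) ^ (e i) * (Polynomial.X - 1) ^ i *
          (qFact ((Polynomial.X : Polynomial ℤ) ^ (p'+1)) i *
            (qInt (Polynomial.X : Polynomial ℤ) (p'+1)) ^ i)) ≠ 0 :=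
        mul_ne_zero (mul_ne_zero (pow_ne_zero _ Polynomial.X_ne_zero) (pow_ne_zero _ hX1))
          (hd0 i)
      apply mul_left_cancel₀ hne
      linear_combination hMI - Polynomial.X ^ (e i) * (Polynomial.X - 1) ^ i * hB
    · -- i = p * n
      intro hi
      subst hi
      have hA : frobCoeff p n (p * n) = 1 := by
        rw [frobCoeff, Finset.sum_eq_single_of_mem n (Finset.self_mem_range_succ n)]
        · simp [qChoose_self]
        · intro j hj hjn
          have hj' : j < n := by have := Finset.mem_range.1 hj; omega
          have hlt : p * j < p * n := by
            have h1 : p * (j+1) ≤ p * n := Nat.mul_le_mul_left p (by omega)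
            have h2 : p * (j+1) = p * j + p := by ring
            omega
          rw [qChoose_eq_zero _ hlt, mul_zero]
      have h1 : qFact (Polynomial.X : Polynomial ℤ) (p * n) =
          qFact ((Polynomial.X : Polynomial ℤ) ^ p) n *
            (qInt (Polynomial.X : Polynomial ℤ) p) ^ n * B := by
        rw [← hB, hA, mul_one]
      exact mul_left_cancel₀ (hd0 n) (h1.symm.trans (PI p hp n))
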